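/- arXiv:2605.09514 — 2 statements merged into one kernel-verified Lean document; each statement's English description precedes it below -/
import Mathlib

section
/- Doubly robust dose-response error decomposition (Theorem, consistency appendix, deterministic form of the DRPCLNET-V1 bound): Assume the hypotheses and notation of the population doubly robust remainder bound [h₀ satisfying the outcome bridge condition; φ₀ satisfying the ν-reweighting condition and having projected target r₀; measurable candidates ĥ, φ̂ with all displayed composites square-integrable; M₀, M̂, K̂ as defined there; and constants B_{e,φ}, B_{e,h} ≥ 0 with E[(φ̂(A,X,Z) − φ₀(A,X,Z))² | σ(A)] ≤ B_{e,φ}² and E[(h₀(A,X,W) − ĥ(A,X,W))² | σ(A)] ≤ B_{e,h}² P-almost surely]. Let μ̂ and κ̂ be square-integrable σ(A)-measurable random variables, and let E_μ, ρ ≥ 0 satisfy E[(μ̂ − M̂)²] ≤ E_μ and E[(κ̂ − K̂)²] ≤ ρ. Then the estimator f̂ := μ̂ + κ̂ satisfies E[(f̂ − M₀)²] ≤ 4·E_μ + 4·ρ + 2·min{ B_{e,φ}² · E[(E[Y − ĥ(A,X,W) | σ(A,X,Z)])²], B_{e,h}² · E[(r₀(A,X,W) − E[φ̂(A,X,Z)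 | σ(A,X,W)])²] }. -/
open MeasureTheory

set_option linter.unusedSectionVars false

section Helpers

section Helpers

variable {Ω : Type*} {mΩ : MeasurableSpace Ω} {P : Measure Ω} [IsProbabilityMeasure P]

lemma l2_mul_integrable {f g : Ω → ℝ} (hf : MemLp f 2 P) (hg : MemLp g 2 P) :
    Integrable (fun ω => f ω * g ω) P := by
  have h : MemLp (f • g) 1 P := hg.smul hf
  exact h.integrable le_rfl

lemma real_cs_aux {a b c : ℝ} (ha : 0 ≤ a) (hb : 0 ≤ b)
    (h : ∀ q : ℚ, 0 < (q : ℝ) → |2 * c| ≤ (q : ℝ) ^ 2 * a + 1 / (q : ℝ) ^ 2 * b) :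
    c ^ 2 ≤ a * b := by
  have hreal : ∀ t : ℝ, 0 < t → 2 * |c| ≤ t * a + b / t := by
    intro t ht
    refine le_of_forall_pos_le_add ?_
    intro ε hε
    have hδ : 0 < ε / (a + 1) := by positivity
    set δ := ε / (a + 1) with hδdef
    obtain ⟨q, hq1, hq2⟩ := exists_rat_btwn
      (show Real.sqrt t < Real.sqrt (t + δ) from
        Real.sqrt_lt_sqrt ht.le (by linarith))
    have hq0 : 0 < (q : ℝ) := lt_of_le_of_lt (Real.sqrt_nonneg t) hq1
    have hsq1 := Real.sq_sqrt ht.le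
    have hsq2 := Real.sq_sqrt (show (0:ℝ) ≤ t + δ by linarith)
    have hq1' : t < (q : ℝ) ^ 2 := by nlinarith [Real.sqrt_nonneg t]
    have hq2' : (q : ℝ) ^ 2 < t + δ := by nlinarith [Real.sqrt_nonneg (t + δ)]
    have h1 := h q hq0
    have h2 : 1 / (q : ℝ) ^ 2 * b ≤ b / t := by
      rw [one_div, inv_mul_eq_div]
      gcongr
    have h3 : δ * a ≤ ε := by
      rw [hδdef, div_mul_eq_mul_div, div_le_iff₀ (by positivity)]
      nlinarith
    have habs : |2 * c| = 2 * |c| := by rw [abs_mul]; norm_num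
    nlinarith
  rcases eq_or_lt_of_le ha with ha0 | ha0
  · have hc0 : 2 * |c| ≤ 0 := by
      refine le_of_forall_pos_le_add ?_
      intro ε hε
      have h1 := hreal ((b + 1) / ε) (by positivity)
      rw [← ha0] at h1
      simp only [mul_zero, zero_add] at h1
      have h2 : b / ((b + 1) / ε) ≤ ε := by
        rw [div_div_eq_mul_div, div_le_iff₀ (by positivity)]
        nlinarith
      linarith
    have : |c| = 0 := le_antisymm (by linarith) (abs_nonneg c)
    have hc : c = 0 := abs_eq_zero.mp this
    rw [hc]
    simpa using mul_nonneg ha hb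
  · rcases eq_or_ne c 0 with hc | hc
    · rw [hc]; simpa using mul_nonneg ha hb
    · have habs : 0 < |c| := abs_pos.2 hc
      have h' := hreal (|c| / a) (by positivity)
      have e1 : |c| / a * a = |c| := div_mul_cancel₀ _ (ne_of_gt ha0)
      have e2 : b / (|c| / a) = b * a / |c| := div_div_eq_mul_div b |c| a
      rw [e1, e2] at h'
      have h'' : |c| ≤ b * a / |c| := by linarith
      have h3 := (le_div_iff₀ habs).mp h''
      nlinarith [sq_abs c]


lemma condexp_sq_le_condexp_mul {m : MeasurableSpace Ω} {u s : Ω → ℝ}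
    (hu : MemLp u 2 P) (hs : MemLp s 2 P) :
    ∀ᵐ ω ∂P, ((P[fun w => u w * s w|m]) ω) ^ 2 ≤
      (P[fun w => u w ^ 2|m]) ω * (P[fun w => s w ^ 2|m]) ω := by
  have hu2 : Integrable (fun w => u w ^ 2) P := hu.integrable_sq
  have hs2 : Integrable (fun w => s w ^ 2) P := hs.integrable_sq
  have hus : Integrable (fun w => u w * s w) P := l2_mul_integrable hu hs
  have key : ∀ (t : ℝ), t ≠ 0 → ∀ (c : ℝ), c = 1 ∨ c = -1 →
      ∀ᵐ ω ∂P, 0 ≤ t ^ 2 * (P[fun w => u w ^ 2|m]) ω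
        + c * (2 * (P[fun w => u w * s w|m]) ω)
        + 1 / t ^ 2 * (P[fun w => s w ^ 2|m]) ω := by
    intro t ht c hc
    have hfun : (fun w => (t * u w + c * s w / t) ^ 2)
        = ((t ^ 2 • fun w => u w ^ 2) + ((c * 2) • fun w => u w * s w)
            + ((1 / t ^ 2) • fun w => s w ^ 2)) := by
      funext w
      simp only [Pi.add_apply, Pi.smul_apply, smul_eq_mul]
      rcases hc with h | h <;> subst h <;> field_simp <;> ring
    have hnn : 0 ≤ᵐ[P] P[fun w => (t * u w + c * s w / t) ^ 2|m] :=
      condExp_nonneg (Filter.Eventually.of_forall fun w => sq_nonneg _)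
    rw [hfun] at hnn
    have int1 : Integrable (t ^ 2 • fun w => u w ^ 2) P := hu2.smul _
    have int2 : Integrable ((c * 2) • fun w => u w * s w) P := hus.smul _
    have int3 : Integrable ((1 / t ^ 2) • fun w => s w ^ 2) P := hs2.smul _
    have hA1 := condExp_add (μ := P) (m := m) (int1.add int2) int3
    have hA2 := condExp_add (μ := P) (m := m) int1 int2
    have hS1 := condExp_smul (μ := P) (m := m) (t ^ 2) (fun w => u w ^ 2)
    have hS2 := condExp_smul (μ := P) (m := m) (c * 2) (fun w => u w * s w)
    have hS3 := condExp_smul (μ := P) (m := m) (1 / t ^ 2) (fun w => s w ^ 2)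
    filter_upwards [hnn, hA1, hA2, hS1, hS2, hS3] with ω h0 h1 h2 h3 h4 h5
    rw [h1] at h0
    simp only [Pi.zero_apply, Pi.add_apply, Pi.smul_apply, smul_eq_mul] at h0 h2 h3 h4 h5
    rw [h2, h3, h4, h5] at h0
    linarith
  have habs : ∀ q : ℚ, ∀ᵐ ω ∂P, 0 < (q : ℝ) →
      |2 * (P[fun w => u w * s w|m]) ω| ≤
        (q : ℝ) ^ 2 * (P[fun w => u w ^ 2|m]) ω
          + 1 / (q : ℝ) ^ 2 * (P[fun w => s w ^ 2|m]) ω := by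
    intro q
    by_cases hq : 0 < (q : ℝ)
    · have k1 := key q (ne_of_gt hq) 1 (Or.inl rfl)
      have k2 := key q (ne_of_gt hq) (-1) (Or.inr rfl)
      filter_upwards [k1, k2] with ω h1 h2 _
      rw [abs_le]
      constructor <;> linarith
    · filter_upwards with ω h
      exact absurd h hq
  have hαnn : 0 ≤ᵐ[P] P[fun w => u w ^ 2|m] :=
    condExp_nonneg (Filter.Eventually.of_forall fun w => sq_nonneg _)
  have hβnn : 0 ≤ᵐ[P] P[fun w => s w ^ 2|m] :=
    condExp_nonneg (Filter.Eventually.of_forall fun w => sq_nonneg _)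
  filter_upwards [ae_all_iff.mpr habs, hαnn, hβnn] with ω h1 h2 h3
  exact real_cs_aux h2 h3 fun q hq => h1 q hq

lemma condCS_int {m : MeasurableSpace Ω} (hm : m ≤ mΩ) {u s : Ω → ℝ}
    (hu : MemLp u 2 P) (hs : MemLp s 2 P) {B : ℝ}
    (hbound : ∀ᵐ ω ∂P, (P[fun w => u w ^ 2|m]) ω ≤ B ^ 2) :
    Integrable (fun ω => ((P[fun w => u w * s w|m]) ω) ^ 2) P ∧
      (∫ ω, ((P[fun w => u w * s w|m]) ω) ^ 2 ∂P) ≤ B ^ 2 * ∫ ω, s ω ^ 2 ∂P := by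
  have hβi : Integrable (P[fun w => s w ^ 2|m]) P := integrable_condExp
  have hβnn : 0 ≤ᵐ[P] P[fun w => s w ^ 2|m] :=
    condExp_nonneg (Filter.Eventually.of_forall fun w => sq_nonneg _)
  have hcs := condexp_sq_le_condexp_mul (m := m) hu hs
  have hptw : ∀ᵐ ω ∂P, ((P[fun w => u w * s w|m]) ω) ^ 2 ≤
      B ^ 2 * (P[fun w => s w ^ 2|m]) ω := by
    filter_upwards [hcs, hbound, hβnn] with ω h1 h2 h3
    calc ((P[fun w => u w * s w|m]) ω) ^ 2
        ≤ (P[fun w => u w ^ 2|m]) ω * (P[fun w => s w ^ 2|m]) ω := h1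
      _ ≤ B ^ 2 * (P[fun w => s w ^ 2|m]) ω := mul_le_mul_of_nonneg_right h2 h3
  have hsm : AEStronglyMeasurable[mΩ] (fun ω => ((P[fun w => u w * s w|m]) ω) ^ 2) P := by
    have := (stronglyMeasurable_condExp (μ := P) (m := m)
      (f := fun w => u w * s w)).mono hm
    exact (this.aestronglyMeasurable.mul this.aestronglyMeasurable).congr
      (Filter.Eventually.of_forall fun ω => by simp [Pi.mul_apply, pow_two])
  have hint : Integrable (fun ω => ((P[fun w => u w * s w|m]) ω) ^ 2) P := by
    refine Integrable.mono' (hβi.const_mul (B ^ 2)) hsm ?_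
    filter_upwards [hptw] with ω h
    rw [Real.norm_eq_abs, abs_of_nonneg (sq_nonneg _)]
    exact h
  refine ⟨hint, ?_⟩
  calc (∫ ω, ((P[fun w => u w * s w|m]) ω) ^ 2 ∂P)
      ≤ ∫ ω, B ^ 2 * (P[fun w => s w ^ 2|m]) ω ∂P :=
        integral_mono_ae hint (hβi.const_mul _) hptw
    _ = B ^ 2 * ∫ ω, (P[fun w => s w ^ 2|m]) ω ∂P := integral_const_mul _ _
    _ = B ^ 2 * ∫ ω, s ω ^ 2 ∂P := by rw [integral_condExp hm]

lemma memℒp_two_condexp {m : MeasurableSpace Ω} (hm : m ≤ mΩ) {s : Ω → ℝ}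
    (hs : MemLp s 2 P) : MemLp (P[s|m]) 2 P := by
  have h1 : MemLp (fun _ : Ω => (1 : ℝ)) 2 P := memLp_const 1
  have hbound : ∀ᵐ ω ∂P, (P[fun _ : Ω => (1 : ℝ) ^ 2|m]) ω ≤ (1 : ℝ) ^ 2 := by
    have : P[fun _ : Ω => (1 : ℝ) ^ 2|m] = fun _ => (1 : ℝ) ^ 2 := condExp_const hm _
    rw [this]
    filter_upwards with ω
    exact le_rfl
  have h := (condCS_int hm h1 hs hbound).1
  have heq : (fun w : Ω => (1 : ℝ) * s w) = s := by funext w; ring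
  rw [heq] at h
  refine (memLp_two_iff_integrable_sq ?_).2 h
  exact (stronglyMeasurable_condExp.mono hm).aestronglyMeasurable


end Helpers

/-- Doubly robust dose-response error decomposition (DRPCLNET-V1 bound,
deterministic form). -/
theorem doubly_robust_dose_response_error_decomposition
    {Ω 𝓐 𝓧 𝓩 𝓦 : Type*}
    [MeasurableSpace Ω] [MeasurableSpace 𝓐] [MeasurableSpace 𝓧]
    [MeasurableSpace 𝓩] [MeasurableSpace 𝓦]
    (P : Measure Ω) [IsProbabilityMeasure P]
    (A : Ω → 𝓐) (X : Ω → 𝓧) (Z : Ω → 𝓩) (W : Ω → 𝓦) (Y : Ω → ℝ)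
    (hA : Measurable A) (hX : Measurable X) (hZ : Measurable Z)
    (hW : Measurable W) (hY : Measurable Y)
    (h0 hHat : 𝓐 × 𝓧 × 𝓦 → ℝ) (phi0 phiHat : 𝓐 × 𝓧 × 𝓩 → ℝ)
    (r0 : 𝓐 × 𝓧 × 𝓦 → ℝ)
    (hh0 : Measurable h0) (hhHat : Measurable hHat)
    (hphi0 : Measurable phi0) (hphiHat : Measurable phiHat)
    (hr0 : Measurable r0)
    (hY2 : MemLp Y 2 P)
    (hh02 : MemLp (fun ω => h0 (A ω, X ω, W ω)) 2 P)
    (hhHat2 : MemLp (fun ω => hHat (A ω, X ω, W ω)) 2 P)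
    (hphi02 : MemLp (fun ω => phi0 (A ω, X ω, Z ω)) 2 P)
    (hphiHat2 : MemLp (fun ω => phiHat (A ω, X ω, Z ω)) 2 P)
    -- outcome bridge condition
    (hbridge :
      P[Y | MeasurableSpace.comap (fun ω => (A ω, X ω, Z ω)) inferInstance]
        =ᵐ[P]
      P[(fun ω => h0 (A ω, X ω, W ω)) |
        MeasurableSpace.comap (fun ω => (A ω, X ω, Z ω)) inferInstance])
    -- ν-reweighting condition, ν the law of (X, W)
    (hreweight : ∀ q : 𝓐 × 𝓧 × 𝓦 → ℝ, Measurable q →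
      Integrable (fun ω => q (A ω, X ω, W ω)) P →
      Integrable (fun ω => phi0 (A ω, X ω, Z ω) * q (A ω, X ω, W ω)) P →
      P[(fun ω => phi0 (A ω, X ω, Z ω) * q (A ω, X ω, W ω)) |
        MeasurableSpace.comap A inferInstance]
        =ᵐ[P]
      fun ω => ∫ p, q (A ω, p) ∂(Measure.map (fun ω' => (X ω', W ω')) P))
    -- projected target condition
    (hproj :
      P[(fun ω => phi0 (A ω, X ω, Z ω)) |
        MeasurableSpace.comap (fun ω => (A ω, X ω, W ω)) inferInstance]
        =ᵐ[P]
      fun ω => r0 (A ω, X ω, W ω))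
    -- conditional second-moment bounds
    (Bephi Beh : ℝ) (hBephi : 0 ≤ Bephi) (hBeh : 0 ≤ Beh)
    (hcondphi : ∀ᵐ ω ∂P,
      (P[(fun ω' => (phiHat (A ω', X ω', Z ω') - phi0 (A ω', X ω', Z ω')) ^ 2) |
        MeasurableSpace.comap A inferInstance]) ω ≤ Bephi ^ 2)
    (hcondh : ∀ᵐ ω ∂P,
      (P[(fun ω' => (h0 (A ω', X ω', W ω') - hHat (A ω', X ω', W ω')) ^ 2) |
        MeasurableSpace.comap A inferInstance]) ω ≤ Beh ^ 2)
    -- final-stage estimators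
    (muHat kappaHat : Ω → ℝ)
    (hmuHatMeas : Measurable[MeasurableSpace.comap A inferInstance] muHat)
    (hkappaHatMeas : Measurable[MeasurableSpace.comap A inferInstance] kappaHat)
    (hmuHat2 : MemLp muHat 2 P) (hkappaHat2 : MemLp kappaHat 2 P)
    (Emu rho : ℝ)
    (hEmu : 0 ≤ Emu) (hrho : 0 ≤ rho)
    (hmuErr : (∫ ω, (muHat ω
        - ∫ p, hHat (A ω, p) ∂(Measure.map (fun ω' => (X ω', W ω')) P)) ^ 2 ∂P) ≤ Emu)
    (hkappaErr : (∫ ω, (kappaHat ω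
        - (P[(fun ω' => phiHat (A ω', X ω', Z ω') * (Y ω' - hHat (A ω', X ω', W ω'))) |
            MeasurableSpace.comap A inferInstance]) ω) ^ 2 ∂P) ≤ rho) :
    (∫ ω, (muHat ω + kappaHat ω
        - ∫ p, h0 (A ω, p) ∂(Measure.map (fun ω' => (X ω', W ω')) P)) ^ 2 ∂P)
      ≤ 4 * Emu + 4 * rho +
        2 * min
          (Bephi ^ 2 *
            ∫ ω, ((P[(fun ω' => Y ω' - hHat (A ω', X ω', W ω')) |
              MeasurableSpace.comap (fun ω' => (A ω', X ω', Z ω')) inferInstance]) ω) ^ 2 ∂P)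
          (Beh ^ 2 *
            ∫ ω, (r0 (A ω, X ω, W ω) -
              (P[(fun ω' => phiHat (A ω', X ω', Z ω')) |
                MeasurableSpace.comap (fun ω' => (A ω', X ω', W ω')) inferInstance]) ω) ^ 2 ∂P) := by
  have hT : Measurable fun ω => (A ω, X ω, Z ω) := hA.prodMk (hX.prodMk hZ)
  have hS : Measurable fun ω => (A ω, X ω, W ω) := hA.prodMk (hX.prodMk hW)
  set nu := Measure.map (fun ω' => (X ω', W ω')) P with hnu_def
  set mA := MeasurableSpace.comap A inferInstance with hmA_def
  set mAXZ := MeasurableSpace.comap (fun ω => (A ω, X ω, Z ω)) inferInstance with hmAXZ_def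
  set mAXW := MeasurableSpace.comap (fun ω => (A ω, X ω, W ω)) inferInstance with hmAXW_def
  have hmA_le := measurable_iff_comap_le.mp hA
  have hmAXZ_le := measurable_iff_comap_le.mp hT
  have hmAXW_le := measurable_iff_comap_le.mp hS
  rw [← hmA_def] at hmA_le
  rw [← hmAXZ_def] at hmAXZ_le
  rw [← hmAXW_def] at hmAXW_le
  have hA_AXZ : mA ≤ mAXZ := by
    have h1 : mA = MeasurableSpace.comap (fun ω => (A ω, X ω, Z ω))
        (MeasurableSpace.comap Prod.fst inferInstance) :=
      (MeasurableSpace.comap_comp (m := (inferInstance : MeasurableSpace 𝓐))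
        (f := Prod.fst) (g := fun ω => (A ω, X ω, Z ω))).symm
    rw [h1, hmAXZ_def]
    exact MeasurableSpace.comap_mono (measurable_iff_comap_le.mp measurable_fst)
  have hA_AXW : mA ≤ mAXW := by
    have h1 : mA = MeasurableSpace.comap (fun ω => (A ω, X ω, W ω))
        (MeasurableSpace.comap Prod.fst inferInstance) :=
      (MeasurableSpace.comap_comp (m := (inferInstance : MeasurableSpace 𝓐))
        (f := Prod.fst) (g := fun ω => (A ω, X ω, W ω))).symm
    rw [h1, hmAXW_def]
    exact MeasurableSpace.comap_mono (measurable_iff_comap_le.mp measurable_fst)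
  have hsm_AXZ : ∀ ψ : 𝓐 × 𝓧 × 𝓩 → ℝ, Measurable ψ →
      StronglyMeasurable[mAXZ] fun ω => ψ (A ω, X ω, Z ω) := fun ψ hψ =>
    (hψ.comp (measurable_iff_comap_le.mpr hmAXZ_def.ge)).stronglyMeasurable
  have hsm_AXW : ∀ ψ : 𝓐 × 𝓧 × 𝓦 → ℝ, Measurable ψ →
      StronglyMeasurable[mAXW] fun ω => ψ (A ω, X ω, W ω) := fun ψ hψ =>
    (hψ.comp (measurable_iff_comap_le.mpr hmAXW_def.ge)).stronglyMeasurable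
  -- L² facts
  have hYh2 : MemLp (fun ω => Y ω - hHat (A ω, X ω, W ω)) 2 P := hY2.sub hhHat2
  have hu2 : MemLp (fun ω => h0 (A ω, X ω, W ω) - hHat (A ω, X ω, W ω)) 2 P := hh02.sub hhHat2
  have he2 : MemLp (fun ω => phiHat (A ω, X ω, Z ω) - phi0 (A ω, X ω, Z ω)) 2 P :=
    hphiHat2.sub hphi02
  set gf := P[(fun ω => Y ω - hHat (A ω, X ω, W ω))|mAXZ] with hgf_def
  set phip := P[(fun ω => phiHat (A ω, X ω, Z ω))|mAXW] with hphip_def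
  set Kf := P[(fun ω => phiHat (A ω, X ω, Z ω) * (Y ω - hHat (A ω, X ω, W ω)))|mA] with hKf_def
  set M0c : Ω → ℝ := (fun ω => ∫ p, h0 (A ω, p) ∂nu) with hM0_def
  set Mhc : Ω → ℝ := (fun ω => ∫ p, hHat (A ω, p) ∂nu) with hMh_def
  have hgf2 : MemLp gf 2 P := memℒp_two_condexp hmAXZ_le hYh2
  have hphip2 : MemLp phip 2 P := memℒp_two_condexp hmAXW_le hphiHat2
  have hr0c2 : MemLp (fun ω => r0 (A ω, X ω, W ω)) 2 P :=
    (memℒp_two_condexp hmAXW_le hphi02).ae_eq hproj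
  have hsc2 : MemLp (fun ω => r0 (A ω, X ω, W ω) - phip ω) 2 P := hr0c2.sub hphip2
  -- reweighting consequences
  have hRw0 : P[(fun ω => phi0 (A ω, X ω, Z ω) * h0 (A ω, X ω, W ω))|mA] =ᵐ[P] M0c :=
    hreweight h0 hh0 (hh02.integrable one_le_two) (l2_mul_integrable hphi02 hh02)
  have hRwh : P[(fun ω => phi0 (A ω, X ω, Z ω) * hHat (A ω, X ω, W ω))|mA] =ᵐ[P] Mhc :=
    hreweight hHat hhHat (hhHat2.integrable one_le_two) (l2_mul_integrable hphi02 hhHat2)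
  have hId2 : P[(fun ω => phi0 (A ω, X ω, Z ω)
        * (h0 (A ω, X ω, W ω) - hHat (A ω, X ω, W ω)))|mA]
      =ᵐ[P] (fun ω => M0c ω - Mhc ω) := by
    have hfe : (fun ω => phi0 (A ω, X ω, Z ω) * (h0 (A ω, X ω, W ω) - hHat (A ω, X ω, W ω)))
        = (fun ω => phi0 (A ω, X ω, Z ω) * h0 (A ω, X ω, W ω))
          - (fun ω => phi0 (A ω, X ω, Z ω) * hHat (A ω, X ω, W ω)) := by
      funext ω; simp only [Pi.sub_apply]; ring
    rw [hfe]
    refine (condExp_sub (l2_mul_integrable hphi02 hh02)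
      (l2_mul_integrable hphi02 hhHat2) _).trans ?_
    filter_upwards [hRw0, hRwh] with ω hω1 hω2
    simp only [Pi.sub_apply, hω1, hω2]
  -- bridge consequence
  have hgdiff : gf =ᵐ[P] P[(fun ω => h0 (A ω, X ω, W ω) - hHat (A ω, X ω, W ω))|mAXZ] := by
    have e1 : (fun ω => Y ω - hHat (A ω, X ω, W ω))
        = Y - (fun ω => hHat (A ω, X ω, W ω)) := rfl
    have e2 : (fun ω => h0 (A ω, X ω, W ω) - hHat (A ω, X ω, W ω))
        = (fun ω => h0 (A ω, X ω, W ω)) - (fun ω => hHat (A ω, X ω, W ω)) := rfl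
    rw [hgf_def, e1, e2]
    refine (condExp_sub (hY2.integrable one_le_two) (hhHat2.integrable one_le_two) _).trans ?_
    refine Filter.EventuallyEq.trans (hbridge.sub (Filter.EventuallyEq.rfl
      (f := P[(fun ω => hHat (A ω, X ω, W ω))|mAXZ]))) ?_
    exact (condExp_sub (hh02.integrable one_le_two) (hhHat2.integrable one_le_two) _).symm
  -- pull-out through mAXZ
  have pullZ : ∀ ψ : 𝓐 × 𝓧 × 𝓩 → ℝ, Measurable ψ →
      MemLp (fun ω => ψ (A ω, X ω, Z ω)) 2 P →
      (P[(fun ω => ψ (A ω, X ω, Z ω) * (Y ω - hHat (A ω, X ω, W ω)))|mA]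
        =ᵐ[P] P[(fun ω => ψ (A ω, X ω, Z ω) * gf ω)|mA]) ∧
      (P[(fun ω => ψ (A ω, X ω, Z ω) * (Y ω - hHat (A ω, X ω, W ω)))|mA]
        =ᵐ[P] P[(fun ω => ψ (A ω, X ω, Z ω)
          * (h0 (A ω, X ω, W ω) - hHat (A ω, X ω, W ω)))|mA]) := by
    intro ψ hψ hψ2
    have hψsm : StronglyMeasurable[mAXZ] fun ω => ψ (A ω, X ω, Z ω) := hsm_AXZ ψ hψ
    have hint1 : Integrable (fun ω => ψ (A ω, X ω, Z ω) * (Y ω - hHat (A ω, X ω, W ω))) P :=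
      l2_mul_integrable hψ2 hYh2
    have hintu : Integrable (fun ω => ψ (A ω, X ω, Z ω)
        * (h0 (A ω, X ω, W ω) - hHat (A ω, X ω, W ω))) P := l2_mul_integrable hψ2 hu2
    have tow1 : P[P[(fun ω => ψ (A ω, X ω, Z ω) * (Y ω - hHat (A ω, X ω, W ω)))|mAXZ]|mA]
        =ᵐ[P] P[(fun ω => ψ (A ω, X ω, Z ω) * (Y ω - hHat (A ω, X ω, W ω)))|mA] :=
      condExp_condExp_of_le hA_AXZ hmAXZ_le
    have tow2 : P[P[(fun ω => ψ (A ω, X ω, Z ω)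
          * (h0 (A ω, X ω, W ω) - hHat (A ω, X ω, W ω)))|mAXZ]|mA]
        =ᵐ[P] P[(fun ω => ψ (A ω, X ω, Z ω)
          * (h0 (A ω, X ω, W ω) - hHat (A ω, X ω, W ω)))|mA] :=
      condExp_condExp_of_le hA_AXZ hmAXZ_le
    have po1 : P[(fun ω => ψ (A ω, X ω, Z ω) * (Y ω - hHat (A ω, X ω, W ω)))|mAXZ]
        =ᵐ[P] fun ω => ψ (A ω, X ω, Z ω) * gf ω :=
      condExp_mul_of_stronglyMeasurable_left hψsm hint1 (hYh2.integrable one_le_two)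
    have pou : P[(fun ω => ψ (A ω, X ω, Z ω)
          * (h0 (A ω, X ω, W ω) - hHat (A ω, X ω, W ω)))|mAXZ]
        =ᵐ[P] fun ω => ψ (A ω, X ω, Z ω)
          * (P[(fun ω => h0 (A ω, X ω, W ω) - hHat (A ω, X ω, W ω))|mAXZ]) ω :=
      condExp_mul_of_stronglyMeasurable_left hψsm hintu (hu2.integrable one_le_two)
    have first : P[(fun ω => ψ (A ω, X ω, Z ω) * (Y ω - hHat (A ω, X ω, W ω)))|mA]
        =ᵐ[P] P[(fun ω => ψ (A ω, X ω, Z ω) * gf ω)|mA] :=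
      tow1.symm.trans (condExp_congr_ae po1)
    refine ⟨first, first.trans ?_⟩
    have step : (fun ω => ψ (A ω, X ω, Z ω) * gf ω)
        =ᵐ[P] P[(fun ω => ψ (A ω, X ω, Z ω)
          * (h0 (A ω, X ω, W ω) - hHat (A ω, X ω, W ω)))|mAXZ] := by
      refine Filter.EventuallyEq.trans ?_ pou.symm
      filter_upwards [hgdiff] with ω hω
      rw [hω]
    exact (condExp_congr_ae step).trans tow2
  obtain ⟨hKg, hKu⟩ := pullZ phiHat hphiHat hphiHat2
  obtain ⟨h0g, h0u⟩ := pullZ phi0 hphi0 hphi02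
  have hMg : P[(fun ω => phi0 (A ω, X ω, Z ω) * gf ω)|mA] =ᵐ[P] fun ω => M0c ω - Mhc ω :=
    h0g.symm.trans (h0u.trans hId2)
  -- pull-out through mAXW
  have pullW : ∀ ψ : 𝓐 × 𝓧 × 𝓩 → ℝ, Measurable ψ →
      MemLp (fun ω => ψ (A ω, X ω, Z ω)) 2 P →
      P[(fun ω => ψ (A ω, X ω, Z ω)
          * (h0 (A ω, X ω, W ω) - hHat (A ω, X ω, W ω)))|mA]
        =ᵐ[P] P[(fun ω => (h0 (A ω, X ω, W ω) - hHat (A ω, X ω, W ω))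
          * (P[(fun ω' => ψ (A ω', X ω', Z ω'))|mAXW]) ω)|mA] := by
    intro ψ hψ hψ2
    have husm : StronglyMeasurable[mAXW]
        fun ω => h0 (A ω, X ω, W ω) - hHat (A ω, X ω, W ω) :=
      hsm_AXW (fun p => h0 p - hHat p) (hh0.sub hhHat)
    have hintu' : Integrable (fun ω => (h0 (A ω, X ω, W ω) - hHat (A ω, X ω, W ω))
        * ψ (A ω, X ω, Z ω)) P := l2_mul_integrable hu2 hψ2
    have hcomm : (fun ω => ψ (A ω, X ω, Z ω)
          * (h0 (A ω, X ω, W ω) - hHat (A ω, X ω, W ω)))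
        = fun ω => (h0 (A ω, X ω, W ω) - hHat (A ω, X ω, W ω)) * ψ (A ω, X ω, Z ω) :=
      funext fun ω => mul_comm _ _
    have tow : P[P[(fun ω => (h0 (A ω, X ω, W ω) - hHat (A ω, X ω, W ω))
          * ψ (A ω, X ω, Z ω))|mAXW]|mA]
        =ᵐ[P] P[(fun ω => (h0 (A ω, X ω, W ω) - hHat (A ω, X ω, W ω))
          * ψ (A ω, X ω, Z ω))|mA] := condExp_condExp_of_le hA_AXW hmAXW_le
    have po : P[(fun ω => (h0 (A ω, X ω, W ω) - hHat (A ω, X ω, W ω))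
          * ψ (A ω, X ω, Z ω))|mAXW]
        =ᵐ[P] fun ω => (h0 (A ω, X ω, W ω) - hHat (A ω, X ω, W ω))
          * (P[(fun ω' => ψ (A ω', X ω', Z ω'))|mAXW]) ω :=
      condExp_mul_of_stronglyMeasurable_left husm hintu' (hψ2.integrable one_le_two)
    rw [hcomm]
    exact tow.symm.trans (condExp_congr_ae po)
  have hWphiHat := pullW phiHat hphiHat hphiHat2
  have hWphi0 : P[(fun ω => phi0 (A ω, X ω, Z ω)
        * (h0 (A ω, X ω, W ω) - hHat (A ω, X ω, W ω)))|mA]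
      =ᵐ[P] P[(fun ω => (h0 (A ω, X ω, W ω) - hHat (A ω, X ω, W ω))
        * r0 (A ω, X ω, W ω))|mA] := by
    refine (pullW phi0 hphi0 hphi02).trans (condExp_congr_ae ?_)
    filter_upwards [hproj] with ω hω
    rw [hω]
  -- the two remainder representations
  set N1 := P[(fun ω => (phiHat (A ω, X ω, Z ω) - phi0 (A ω, X ω, Z ω)) * gf ω)|mA]
    with hN1_def
  set N2 := P[(fun ω => (h0 (A ω, X ω, W ω) - hHat (A ω, X ω, W ω))
      * (r0 (A ω, X ω, W ω) - phip ω))|mA] with hN2_def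
  set N3 := P[(fun ω => (h0 (A ω, X ω, W ω) - hHat (A ω, X ω, W ω))
      * r0 (A ω, X ω, W ω))|mA] with hN3_def
  have hcA : (fun ω => Mhc ω + Kf ω - M0c ω) =ᵐ[P] N1 := by
    have hfe : (fun ω => (phiHat (A ω, X ω, Z ω) - phi0 (A ω, X ω, Z ω)) * gf ω)
        = (fun ω => phiHat (A ω, X ω, Z ω) * gf ω)
          - (fun ω => phi0 (A ω, X ω, Z ω) * gf ω) := by
      funext ω; simp only [Pi.sub_apply]; ring
    have hsub : N1 =ᵐ[P] P[(fun ω => phiHat (A ω, X ω, Z ω) * gf ω)|mA]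
        - P[(fun ω => phi0 (A ω, X ω, Z ω) * gf ω)|mA] := by
      rw [hN1_def, hfe]
      exact condExp_sub (l2_mul_integrable hphiHat2 hgf2) (l2_mul_integrable hphi02 hgf2) _
    have hKf' : Kf =ᵐ[P] P[(fun ω => phiHat (A ω, X ω, Z ω) * gf ω)|mA] := hKg
    filter_upwards [hsub, hKf', hMg] with ω h1 h2 h3
    simp only [Pi.sub_apply] at h1
    rw [h1, ← h2, h3]
    ring
  have hcB : (fun ω => Mhc ω + Kf ω - M0c ω) =ᵐ[P] fun ω => -(N2 ω) := by
    have hfe : (fun ω => (h0 (A ω, X ω, W ω) - hHat (A ω, X ω, W ω))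
          * (r0 (A ω, X ω, W ω) - phip ω))
        = (fun ω => (h0 (A ω, X ω, W ω) - hHat (A ω, X ω, W ω)) * r0 (A ω, X ω, W ω))
          - (fun ω => (h0 (A ω, X ω, W ω) - hHat (A ω, X ω, W ω)) * phip ω) := by
      funext ω; simp only [Pi.sub_apply]; ring
    have hsub : N2 =ᵐ[P]
        P[(fun ω => (h0 (A ω, X ω, W ω) - hHat (A ω, X ω, W ω)) * r0 (A ω, X ω, W ω))|mA]
        - P[(fun ω => (h0 (A ω, X ω, W ω) - hHat (A ω, X ω, W ω)) * phip ω)|mA] := by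
      rw [hN2_def, hfe]
      exact condExp_sub (l2_mul_integrable hu2 hr0c2) (l2_mul_integrable hu2 hphip2) _
    have hKf2 : Kf =ᵐ[P]
        P[(fun ω => (h0 (A ω, X ω, W ω) - hHat (A ω, X ω, W ω)) * phip ω)|mA] :=
      hKu.trans hWphiHat
    have hM2 : P[(fun ω => (h0 (A ω, X ω, W ω) - hHat (A ω, X ω, W ω))
          * r0 (A ω, X ω, W ω))|mA] =ᵐ[P] fun ω => M0c ω - Mhc ω := hWphi0.symm.trans hId2
    filter_upwards [hsub, hKf2, hM2] with ω h1 h2 h3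
    simp only [Pi.sub_apply] at h1
    rw [h1, ← h2, h3]
    ring
  have hMdiff : (fun ω => M0c ω - Mhc ω) =ᵐ[P] N3 := hId2.symm.trans hWphi0
  -- conditional Cauchy-Schwarz bounds
  have hCS1 := condCS_int hmA_le he2 hgf2 (B := Bephi) hcondphi
  have hN1int : Integrable (fun ω => (N1 ω) ^ 2) P := hCS1.1
  have hN1le : (∫ ω, (N1 ω) ^ 2 ∂P) ≤ Bephi ^ 2 * ∫ ω, (gf ω) ^ 2 ∂P := hCS1.2
  have hCS2 := condCS_int hmA_le hu2 hsc2 (B := Beh) hcondh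
  have hN2int : Integrable (fun ω => (N2 ω) ^ 2) P := hCS2.1
  have hN2le : (∫ ω, (N2 ω) ^ 2 ∂P)
      ≤ Beh ^ 2 * ∫ ω, (r0 (A ω, X ω, W ω) - phip ω) ^ 2 ∂P := hCS2.2
  have hCS3 := condCS_int hmA_le hu2 hr0c2 (B := Beh) hcondh
  have hN3int : Integrable (fun ω => (N3 ω) ^ 2) P := hCS3.1
  -- MemLp for the remainders
  have hN1mem : MemLp N1 2 P :=
    (memLp_two_iff_integrable_sq
      ((stronglyMeasurable_condExp.mono hmA_le).aestronglyMeasurable)).2 hN1int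
  have hN3mem : MemLp N3 2 P :=
    (memLp_two_iff_integrable_sq
      ((stronglyMeasurable_condExp.mono hmA_le).aestronglyMeasurable)).2 hN3int
  -- reduce goal
  suffices hmain : (∫ ω, (muHat ω + kappaHat ω - M0c ω) ^ 2 ∂P)
      ≤ 4 * Emu + 4 * rho +
        2 * min (Bephi ^ 2 * ∫ ω, (gf ω) ^ 2 ∂P)
          (Beh ^ 2 * ∫ ω, (r0 (A ω, X ω, W ω) - phip ω) ^ 2 ∂P) by
    exact hmain
  have hRHS0 : (0:ℝ) ≤ 2 * min (Bephi ^ 2 * ∫ ω, (gf ω) ^ 2 ∂P)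
      (Beh ^ 2 * ∫ ω, (r0 (A ω, X ω, W ω) - phip ω) ^ 2 ∂P) := by
    have h1 : (0:ℝ) ≤ Bephi ^ 2 * ∫ ω, (gf ω) ^ 2 ∂P :=
      mul_nonneg (sq_nonneg _) (integral_nonneg fun ω => sq_nonneg _)
    have h2 : (0:ℝ) ≤ Beh ^ 2 * ∫ ω, (r0 (A ω, X ω, W ω) - phip ω) ^ 2 ∂P :=
      mul_nonneg (sq_nonneg _) (integral_nonneg fun ω => sq_nonneg _)
    have := le_min h1 h2
    linarith
  by_cases hLI : Integrable (fun ω => (muHat ω + kappaHat ω - M0c ω) ^ 2) P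
  swap
  · rw [integral_undef hLI]
    linarith
  · -- measurability of M0c
    haveI hnuprob : IsProbabilityMeasure nu := by
      rw [hnu_def]; exact Measure.isProbabilityMeasure_map (hX.prodMk hW).aemeasurable
    have hmu_asm :=
      (hmuHatMeas.mono hmA_le le_rfl).aestronglyMeasurable (μ := P)
    have hkap_asm :=
      (hkappaHatMeas.mono hmA_le le_rfl).aestronglyMeasurable (μ := P)
    have hM0_asm := by
      have h1 : StronglyMeasurable (fun a : 𝓐 => ∫ p, h0 (a, p) ∂nu) :=
        hh0.stronglyMeasurable.integral_prod_right'
      exact (h1.measurable.comp hA).aestronglyMeasurable (μ := P)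
    have hFsm :=
      (hmu_asm.add hkap_asm).sub hM0_asm
    have hFm : MemLp (fun ω => muHat ω + kappaHat ω - M0c ω) 2 P :=
      (memLp_two_iff_integrable_sq hFsm).2 hLI
    have hcm : MemLp (fun ω => Mhc ω + Kf ω - M0c ω) 2 P := hN1mem.ae_eq hcA.symm
    have hKmem : MemLp Kf 2 P := by
      have hKeq : (fun ω => N1 ω + N3 ω) =ᵐ[P] Kf := by
        filter_upwards [hcA, hMdiff] with ω h1 h2
        have : Mhc ω + Kf ω - M0c ω = N1 ω := h1
        have h2' : M0c ω - Mhc ω = N3 ω := h2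
        linarith
      exact (hN1mem.add hN3mem).ae_eq hKeq
    have hbc : MemLp (fun ω => kappaHat ω - Kf ω) 2 P := hkappaHat2.sub hKmem
    have hac : MemLp (fun ω => muHat ω - Mhc ω) 2 P := by
      have heq : (fun ω => muHat ω - Mhc ω)
          = fun ω => (muHat ω + kappaHat ω - M0c ω) - (kappaHat ω - Kf ω)
            - (Mhc ω + Kf ω - M0c ω) := by
        funext ω; ring
      rw [heq]
      exact (hFm.sub hbc).sub hcm
    have hInt_a : Integrable (fun ω => (muHat ω - Mhc ω) ^ 2) P := hac.integrable_sq
    have hInt_b : Integrable (fun ω => (kappaHat ω - Kf ω) ^ 2) P := hbc.integrable_sq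
    have hInt_c : Integrable (fun ω => (Mhc ω + Kf ω - M0c ω) ^ 2) P := hcm.integrable_sq
    have hptw : ∀ ω, (muHat ω + kappaHat ω - M0c ω) ^ 2
        ≤ 4 * (muHat ω - Mhc ω) ^ 2 + 4 * (kappaHat ω - Kf ω) ^ 2
          + 2 * (Mhc ω + Kf ω - M0c ω) ^ 2 := by
      intro ω
      nlinarith [sq_nonneg ((muHat ω - Mhc ω) - (kappaHat ω - Kf ω)),
        sq_nonneg ((muHat ω - Mhc ω) + (kappaHat ω - Kf ω) - (Mhc ω + Kf ω - M0c ω))]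
    have hstep : (∫ ω, (muHat ω + kappaHat ω - M0c ω) ^ 2 ∂P)
        ≤ ∫ ω, (4 * (muHat ω - Mhc ω) ^ 2 + 4 * (kappaHat ω - Kf ω) ^ 2
          + 2 * (Mhc ω + Kf ω - M0c ω) ^ 2) ∂P :=
      integral_mono_of_nonneg (Filter.Eventually.of_forall fun ω => sq_nonneg _)
        (((hInt_a.const_mul 4).add (hInt_b.const_mul 4)).add (hInt_c.const_mul 2))
        (Filter.Eventually.of_forall hptw)
    have hsplit : (∫ ω, (4 * (muHat ω - Mhc ω) ^ 2 + 4 * (kappaHat ω - Kf ω) ^ 2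
          + 2 * (Mhc ω + Kf ω - M0c ω) ^ 2) ∂P)
        = 4 * (∫ ω, (muHat ω - Mhc ω) ^ 2 ∂P) + 4 * (∫ ω, (kappaHat ω - Kf ω) ^ 2 ∂P)
          + 2 * (∫ ω, (Mhc ω + Kf ω - M0c ω) ^ 2 ∂P) := by
      have e1 : (∫ ω, (4 * (muHat ω - Mhc ω) ^ 2 + 4 * (kappaHat ω - Kf ω) ^ 2
            + 2 * (Mhc ω + Kf ω - M0c ω) ^ 2) ∂P)
          = (∫ ω, (4 * (muHat ω - Mhc ω) ^ 2 + 4 * (kappaHat ω - Kf ω) ^ 2) ∂P)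
            + ∫ ω, 2 * (Mhc ω + Kf ω - M0c ω) ^ 2 ∂P :=
        integral_add ((hInt_a.const_mul 4).add (hInt_b.const_mul 4)) (hInt_c.const_mul 2)
      have e2 : (∫ ω, (4 * (muHat ω - Mhc ω) ^ 2 + 4 * (kappaHat ω - Kf ω) ^ 2) ∂P)
          = (∫ ω, 4 * (muHat ω - Mhc ω) ^ 2 ∂P) + ∫ ω, 4 * (kappaHat ω - Kf ω) ^ 2 ∂P :=
        integral_add (hInt_a.const_mul 4) (hInt_b.const_mul 4)
      rw [e1, e2, integral_const_mul, integral_const_mul, integral_const_mul]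
    have hcle1 : (∫ ω, (Mhc ω + Kf ω - M0c ω) ^ 2 ∂P) = ∫ ω, (N1 ω) ^ 2 ∂P :=
      integral_congr_ae (hcA.mono fun ω h => by
        show (Mhc ω + Kf ω - M0c ω) ^ 2 = N1 ω ^ 2
        rw [show Mhc ω + Kf ω - M0c ω = N1 ω from h])
    have hcle2 : (∫ ω, (Mhc ω + Kf ω - M0c ω) ^ 2 ∂P) = ∫ ω, (N2 ω) ^ 2 ∂P :=
      integral_congr_ae (hcB.mono fun ω h => by
        show (Mhc ω + Kf ω - M0c ω) ^ 2 = N2 ω ^ 2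
        rw [show Mhc ω + Kf ω - M0c ω = -(N2 ω) from h]; ring)
    have haE : (∫ ω, (muHat ω - Mhc ω) ^ 2 ∂P) ≤ Emu := hmuErr
    have hbE : (∫ ω, (kappaHat ω - Kf ω) ^ 2 ∂P) ≤ rho := hkappaErr
    have hminle : (∫ ω, (Mhc ω + Kf ω - M0c ω) ^ 2 ∂P)
        ≤ min (Bephi ^ 2 * ∫ ω, (gf ω) ^ 2 ∂P)
          (Beh ^ 2 * ∫ ω, (r0 (A ω, X ω, W ω) - phip ω) ^ 2 ∂P) := by
      refine le_min ?_ ?_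
      · rw [hcle1]; exact hN1le
      · rw [hcle2]; exact hN2le
    linarith
end Helpers
end

section
/- Fixed-anchor ATT doubly robust identity (Appendix on conditional dose-response consistency): Suppose singletons of 𝒜 are measurable, fix a' ∈ 𝒜 with P(A=a') > 0, and let ν_{a'} denote the law of (X,W) under the conditional measure P(· | {A=a'}). Suppose h₀ : 𝒜×𝒳×𝒲 → ℝ satisfies the outcome bridge condition and φ₀ : 𝒜×𝒳×𝒵 → ℝ satisfies the ν_{a'}-reweighting condition, and let ĥ : 𝒜×𝒳×𝒲 → ℝ and φ̂ : 𝒜×𝒳×𝒵 → ℝ be measurable, with Y, h₀(A,X,W), ĥ(A,X,W), φ₀(A,X,Z), φ̂(A,X,Z) square-integrable under P. Define M₀'(ω) := ∫ h₀(A(ω),x,w) dν_{a'}(x,w), M̂'(ω) := ∫ ĥ(A(ω),x,w) dν_{a'}(x,w), and K̂ := E[φ̂(A,X,Z)·(Y − ĥ(A,X,W)) | σ(A)]. Then, P-almost surely, M₀' − M̂' − K̂ = E[(φ₀(A,X,Z) − φ̂(A,X,Z))·(h₀(A,X,W) − ĥ(A,X,W)) | σ(A)]. -/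
open MeasureTheory ProbabilityTheory

lemma my_int_mul {Ω : Type*} {mΩ : MeasurableSpace Ω} {P : Measure Ω} [IsProbabilityMeasure P]
    {f g : Ω → ℝ} (hf : MemLp f 2 P) (hg : MemLp g 2 P) :
    Integrable (fun ω => f ω * g ω) P :=
  memLp_one_iff_integrable.mp (@MemLp.smul _ _ _ _ _ _ _ _ _ 2 2 1 g f hg hf ⟨by simp [ENNReal.inv_two_add_inv_two]⟩)

lemma my_dr_identity {Ω : Type*} [m0 : MeasurableSpace Ω] (P : Measure Ω)
    [IsProbabilityMeasure P]
    {m m2 : MeasurableSpace Ω} (hm : m ≤ m2) (hm2 : m2 ≤ m0)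
    {Y f0 fh p0 ph M0 Mh : Ω → ℝ}
    (hY2 : MemLp Y 2 P) (hf02 : MemLp f0 2 P) (hfh2 : MemLp fh 2 P)
    (hp02 : MemLp p0 2 P) (hph2 : MemLp ph 2 P)
    (hsm : StronglyMeasurable[m2] ph)
    (hbridge : P[Y|m2] =ᵐ[P] P[f0|m2])
    (H1 : P[(fun ω => p0 ω * f0 ω)|m] =ᵐ[P] M0)
    (H2 : P[(fun ω => p0 ω * fh ω)|m] =ᵐ[P] Mh) :
    (fun ω => M0 ω - Mh ω - (P[(fun ω => ph ω * (Y ω - fh ω))|m]) ω) =ᵐ[P]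
      P[(fun ω => (p0 ω - ph ω) * (f0 ω - fh ω))|m] := by
  haveI : SigmaFinite (P.trim hm2) := inferInstance
  haveI : SigmaFinite (P.trim (hm.trans hm2)) := inferInstance
  have intY : Integrable Y P := hY2.integrable one_le_two
  have intf0 : Integrable f0 P := hf02.integrable one_le_two
  have intfh : Integrable fh P := hfh2.integrable one_le_two
  have ip0f0 : Integrable (fun ω => p0 ω * f0 ω) P := my_int_mul hp02 hf02
  have ip0fh : Integrable (fun ω => p0 ω * fh ω) P := my_int_mul hp02 hfh2
  have iphYf0 : Integrable (fun ω => ph ω * (Y ω - f0 ω)) P := my_int_mul hph2 (hY2.sub hf02)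
  have iphf0fh : Integrable (fun ω => ph ω * (f0 ω - fh ω)) P := my_int_mul hph2 (hf02.sub hfh2)
  -- E[p0 * (f0 - fh) | m] = M0 - Mh
  have E0 : P[(fun ω => p0 ω * (f0 ω - fh ω))|m] =ᵐ[P] fun ω => M0 ω - Mh ω := by
    have hfe : (fun ω => p0 ω * (f0 ω - fh ω))
        = (fun ω => p0 ω * f0 ω) - fun ω => p0 ω * fh ω := by
      funext ω; simp [mul_sub]
    rw [hfe]
    filter_upwards [condExp_sub ip0f0 ip0fh m, H1, H2] with ω h h1 h2
    rw [h, Pi.sub_apply, h1, h2]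
  -- E[ph * (Y - f0) | m] = 0
  have Ebridge0 : P[(fun ω => Y ω - f0 ω)|m2] =ᵐ[P] 0 := by
    have hsub := condExp_sub (m := m2) (μ := P) intY intf0
    have : (fun ω => Y ω - f0 ω) = Y - f0 := rfl
    rw [this]
    filter_upwards [hsub, hbridge] with ω h hb
    rw [h, Pi.sub_apply, hb]
    simp
  have Epull : P[(fun ω => ph ω * (Y ω - f0 ω))|m2] =ᵐ[P] 0 := by
    have hmul := condExp_mul_of_stronglyMeasurable_left (μ := P) hsm
      (g := fun ω => Y ω - f0 ω) iphYf0 (intY.sub intf0)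
    have heq : (fun ω => ph ω * (Y ω - f0 ω)) = ph * fun ω => Y ω - f0 ω := rfl
    rw [heq]
    filter_upwards [hmul, Ebridge0] with ω h hb
    rw [h, Pi.mul_apply, hb]
    simp
  have Ezero : P[(fun ω => ph ω * (Y ω - f0 ω))|m] =ᵐ[P] 0 := by
    have htower := condExp_condExp_of_le (μ := P)
      (f := fun ω => ph ω * (Y ω - f0 ω)) hm hm2
    have hcongr := condExp_congr_ae (m := m) (μ := P) Epull
    rw [condExp_zero] at hcongr
    exact htower.symm.trans hcongr
  -- decompose K
  have EK : P[(fun ω => ph ω * (Y ω - fh ω))|m]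
      =ᵐ[P] P[(fun ω => ph ω * (f0 ω - fh ω))|m] := by
    have hfe : (fun ω => ph ω * (Y ω - fh ω))
        = (fun ω => ph ω * (f0 ω - fh ω)) + fun ω => ph ω * (Y ω - f0 ω) := by
      funext ω; simp only [Pi.add_apply]; ring
    rw [hfe]
    filter_upwards [condExp_add (m := m) iphf0fh iphYf0, Ezero] with ω h hz
    rw [h, Pi.add_apply, hz]
    simp
  -- RHS decomposition
  have ERHS : P[(fun ω => (p0 ω - ph ω) * (f0 ω - fh ω))|m]
      =ᵐ[P] P[(fun ω => p0 ω * (f0 ω - fh ω))|m] - P[(fun ω => ph ω * (f0 ω - fh ω))|m] := by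
    have hfe : (fun ω => (p0 ω - ph ω) * (f0 ω - fh ω))
        = (fun ω => p0 ω * (f0 ω - fh ω)) - fun ω => ph ω * (f0 ω - fh ω) := by
      funext ω; simp only [Pi.sub_apply]; ring
    rw [hfe]
    exact condExp_sub (my_int_mul hp02 (hf02.sub hfh2)) iphf0fh m
  filter_upwards [E0, EK, ERHS] with ω h0e hke hre
  rw [hre, Pi.sub_apply, hke, ← h0e]

/-- Fixed-anchor ATT doubly robust identity. -/
theorem fixed_anchor_att_doubly_robust_identity
    {Ω 𝓐 𝓧 𝓩 𝓦 : Type*}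
    [MeasurableSpace Ω] [MeasurableSpace 𝓐] [MeasurableSingletonClass 𝓐]
    [MeasurableSpace 𝓧] [MeasurableSpace 𝓩] [MeasurableSpace 𝓦]
    (P : Measure Ω) [IsProbabilityMeasure P]
    (A : Ω → 𝓐) (X : Ω → 𝓧) (Z : Ω → 𝓩) (W : Ω → 𝓦) (Y : Ω → ℝ)
    (hA : Measurable A) (hX : Measurable X) (hZ : Measurable Z)
    (hW : Measurable W) (hY : Measurable Y)
    (a' : 𝓐) (ha' : 0 < P (A ⁻¹' {a'}))
    (h0 hHat : 𝓐 × 𝓧 × 𝓦 → ℝ) (phi0 phiHat : 𝓐 × 𝓧 × 𝓩 → ℝ)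
    (hh0 : Measurable h0) (hhHat : Measurable hHat)
    (hphi0 : Measurable phi0) (hphiHat : Measurable phiHat)
    (hY2 : MemLp Y 2 P)
    (hh02 : MemLp (fun ω => h0 (A ω, X ω, W ω)) 2 P)
    (hhHat2 : MemLp (fun ω => hHat (A ω, X ω, W ω)) 2 P)
    (hphi02 : MemLp (fun ω => phi0 (A ω, X ω, Z ω)) 2 P)
    (hphiHat2 : MemLp (fun ω => phiHat (A ω, X ω, Z ω)) 2 P)
    -- outcome bridge condition
    (hbridge :
      P[Y | MeasurableSpace.comap (fun ω => (A ω, X ω, Z ω)) inferInstance]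
        =ᵐ[P]
      P[(fun ω => h0 (A ω, X ω, W ω)) |
        MeasurableSpace.comap (fun ω => (A ω, X ω, Z ω)) inferInstance])
    -- ν_{a'}-reweighting condition, ν_{a'} the law of (X, W) under P(· | {A = a'})
    (hreweight : ∀ q : 𝓐 × 𝓧 × 𝓦 → ℝ, Measurable q →
      Integrable (fun ω => q (A ω, X ω, W ω)) P →
      Integrable (fun ω => phi0 (A ω, X ω, Z ω) * q (A ω, X ω, W ω)) P →
      P[(fun ω => phi0 (A ω, X ω, Z ω) * q (A ω, X ω, W ω)) |
        MeasurableSpace.comap A inferInstance]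
        =ᵐ[P]
      fun ω => ∫ p, q (A ω, p)
        ∂(Measure.map (fun ω' => (X ω', W ω')) (ProbabilityTheory.cond P (A ⁻¹' {a'})))) :
    (fun ω =>
      (∫ p, h0 (A ω, p)
          ∂(Measure.map (fun ω' => (X ω', W ω')) (ProbabilityTheory.cond P (A ⁻¹' {a'}))))
        - (∫ p, hHat (A ω, p)
            ∂(Measure.map (fun ω' => (X ω', W ω')) (ProbabilityTheory.cond P (A ⁻¹' {a'}))))
        - (P[(fun ω' => phiHat (A ω', X ω', Z ω') * (Y ω' - hHat (A ω', X ω', W ω'))) |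
            MeasurableSpace.comap A inferInstance]) ω)
      =ᵐ[P]
    P[(fun ω => (phi0 (A ω, X ω, Z ω) - phiHat (A ω, X ω, Z ω))
        * (h0 (A ω, X ω, W ω) - hHat (A ω, X ω, W ω))) |
      MeasurableSpace.comap A inferInstance] := by
  have hg : Measurable[MeasurableSpace.comap (fun ω => (A ω, X ω, Z ω)) inferInstance]
      (fun ω => (A ω, X ω, Z ω)) := Measurable.of_comap_le le_rfl
  have hm : MeasurableSpace.comap A inferInstance
      ≤ MeasurableSpace.comap (fun ω => (A ω, X ω, Z ω)) inferInstance := by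
    rintro s ⟨t, ht, rfl⟩
    exact ⟨Prod.fst ⁻¹' t, measurable_fst ht, rfl⟩
  exact my_dr_identity P hm (hA.prodMk (hX.prodMk hZ)).comap_le
    hY2 hh02 hhHat2 hphi02 hphiHat2
    (hphiHat.comp hg).stronglyMeasurable hbridge
    (hreweight h0 hh0 (hh02.integrable one_le_two) (my_int_mul hphi02 hh02))
    (hreweight hHat hhHat (hhHat2.integrable one_le_two) (my_int_mul hphi02 hhHat2))
end
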